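/- arXiv:2009.09816 — 2 statements merged into one kernel-verified Lean document; each statement's English description precedes it below -/
import Mathlib

section
/- The function Ψ(κ, τ) = (κ√δ(√δ − 1)/2) · (e^{2κ√δ τ} − 1)/(e^{2κ√δ τ} + ω), with ω = (1 − √δ)/(1 + √δ), satisfies the Riccati ODE dΨ/dτ = 2Ψ² − 2δκΨ + (δ(δ−1)/2)κ² with Ψ(0) = 0. -/
/-! Writing `E = exp (2κ√δ τ)`, the quotient rule turns `Ψ'` into a rational function of `E`,
and the Riccati equation becomes a polynomial identity in `E` and `√δ` once the denominator
`E + ω` is cleared; that denominator is positive for `τ ≥ 0` because `E ≥ 1` and `ω > -1`. -/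

open Real

lemma hasDerivAt_exp_sub_one_div_exp_add {c ω t : ℝ} (h : exp (c * t) + ω ≠ 0) :
    HasDerivAt (fun t => (exp (c * t) - 1) / (exp (c * t) + ω))
      (c * (1 + ω) * exp (c * t) / (exp (c * t) + ω) ^ 2) t := by
  have hexp : HasDerivAt (fun t => exp (c * t)) (exp (c * t) * c) t := by
    simpa using ((hasDerivAt_id t).const_mul c).exp
  refine ((hexp.sub_const 1).div (hexp.add_const ω) h).congr_deriv ?_
  field_simp
  ring

lemma riccati_identity {κ δ s ω E : ℝ} (hsδ : s ^ 2 = δ) (hs : 1 + s ≠ 0)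
    (hω : ω = (1 - s) / (1 + s)) (hE : E + ω ≠ 0) :
    κ * s * (s - 1) / 2 * (2 * κ * s * (1 + ω) * E / (E + ω) ^ 2)
      = 2 * (κ * s * (s - 1) / 2 * ((E - 1) / (E + ω))) ^ 2
        - 2 * δ * κ * (κ * s * (s - 1) / 2 * ((E - 1) / (E + ω)))
        + δ * (δ - 1) / 2 * κ ^ 2 := by
  subst hsδ
  rw [eq_div_iff hs] at hω
  field_simp
  -- the cleared identity fails by exactly `κ²s²(1 - s)(ω + 1) · (ω(1 + s) - (1 - s))`
  linear_combination κ ^ 2 * s ^ 2 * (1 - s) * (ω + 1) * hω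

theorem stmt2_general (κ δ : ℝ) (hκ : 0 < κ) (hδ : 0 < δ)
    (ω : ℝ) (hω : ω = (1 - Real.sqrt δ) / (1 + Real.sqrt δ))
    (Ψ : ℝ → ℝ)
    (hΨ : Ψ = fun τ => κ * Real.sqrt δ * (Real.sqrt δ - 1) / 2 *
      ((Real.exp (2 * κ * Real.sqrt δ * τ) - 1) / (Real.exp (2 * κ * Real.sqrt δ * τ) + ω))) :
    (∀ τ : ℝ, 0 ≤ τ →
      HasDerivAt Ψ (2 * (Ψ τ)^2 - 2 * δ * κ * Ψ τ + δ * (δ - 1) / 2 * κ^2) τ) ∧ Ψ 0 = 0 := by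
  refine ⟨fun τ hτ => ?_, by simp [hΨ]⟩
  have hs : 0 < √δ := sqrt_pos.mpr hδ
  have hω_gt : -1 < ω := by
    rw [hω, lt_div_iff₀ (by positivity)]
    linarith
  have hE : 1 ≤ exp (2 * κ * √δ * τ) := one_le_exp (by positivity)
  have hden : exp (2 * κ * √δ * τ) + ω ≠ 0 := by linarith
  subst hΨ
  exact ((hasDerivAt_exp_sub_one_div_exp_add hden).const_mul _).congr_deriv
    (riccati_identity (sq_sqrt hδ.le) (by positivity) hω hden)

theorem stmt2 (κ δ : ℝ) (hκ : 0 < κ) (hδ : 0 < δ) (hδ1 : δ ≠ 1)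
    (ω : ℝ) (hω : ω = (1 - Real.sqrt δ) / (1 + Real.sqrt δ))
    (Ψ : ℝ → ℝ)
    (hΨ : Ψ = fun τ => κ * Real.sqrt δ * (Real.sqrt δ - 1) / 2 *
      ((Real.exp (2 * κ * Real.sqrt δ * τ) - 1) / (Real.exp (2 * κ * Real.sqrt δ * τ) + ω))) :
    (∀ τ : ℝ, 0 ≤ τ →
      HasDerivAt Ψ (2 * (Ψ τ)^2 - 2 * δ * κ * Ψ τ + δ * (δ - 1) / 2 * κ^2) τ) ∧ Ψ 0 = 0 :=
  stmt2_general κ δ hκ hδ ω hω Ψ hΨ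
end

section
/- The function λ_{ij}(τ) defined below solves the linear ODE λ' = λ(2Ψ(κ_i,τ) + 2Ψ(κ_j,τ) − δ(κ_i + κ_j)) − δ(κ_i − κ_j)(Ψ(κ_i,τ) + ((1−δ)/2)κ_i) with λ(0) = 0, where Ψ(κ,τ) = (κ√δ(√δ−1)/2)(e^{2κ√δτ}−1)/(e^{2κ√δτ}+ω), ω = (1−√δ)/(1+√δ); explicitly λ_{ij}(τ) = κ_i (√δ(1−√δ)) / (2(e^{2κ_i√δτ}+ω)(e^{2κ_j√δτ}+ω)) · [ ((κ_j−κ_i)/(κ_j+κ_i))(e^{(κ_i+κ_j)√δτ}−1)(e^{(κ_i+κ_j)√δτ}+ω) + e^{2κ_i√δτ}(e^{(κ_j−κ_i)√δτ}−1)(e^{(κ_j−κ_i)√δτ}+ω) ]. -/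
/-!
Write `s = √δ` and `E_κ = exp (2κsτ)`. The relation `ω (1 + s) = 1 - s` gives
`2Ψ(κ, τ) - δκ = κs - E_κ' / (E_κ + ω)`, so `m_κ = exp (κsτ) / (E_κ + ω)` (`intFactor`) solves
`m_κ' = (2Ψ(κ, ·) - δκ) m_κ`, and `m_i m_j` is an integrating factor of the linear equation.
Dividing by it, `λ = m_i m_j g` where `g` (`lamScaled`) is a combination of
`χ(x) = (x - 1)(x + ω)/x = x + ω - 1 - ω/x` at `x = exp ((κ_i + κ_j)sτ)` and
`x = exp ((κ_j - κ_i)sτ)`, so `g'` is explicit and `m_i m_j g'` is the inhomogeneous term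
`-δ(κ_i - κ_j)(Ψ(κ_i, τ) + (1 - δ)κ_i/2)`. For `τ ≥ 0` the denominators are positive:
`E_κ + ω ≥ 1 + ω > 0`.
-/

open Real

noncomputable section

namespace LambdaIJ

def psi (s ω κ τ : ℝ) : ℝ :=
  κ * s * (s - 1) / 2 * ((exp (2 * κ * s * τ) - 1) / (exp (2 * κ * s * τ) + ω))

def lam (s ω κi κj τ : ℝ) : ℝ :=
  κi * (s * (1 - s)) / (2 * (exp (2 * κi * s * τ) + ω) * (exp (2 * κj * s * τ) + ω)) *
    ((κj - κi) / (κj + κi) * (exp ((κi + κj) * s * τ) - 1) * (exp ((κi + κj) * s * τ) + ω)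
      + exp (2 * κi * s * τ) * (exp ((κj - κi) * s * τ) - 1) * (exp ((κj - κi) * s * τ) + ω))

def intFactor (s ω κ τ : ℝ) : ℝ := exp (κ * s * τ) / (exp (2 * κ * s * τ) + ω)

def chi (ω a τ : ℝ) : ℝ := (exp (a * τ) - 1) * (exp (a * τ) + ω) / exp (a * τ)

def lamScaled (s ω κi κj τ : ℝ) : ℝ :=
  κi * (s * (1 - s)) / 2 *
    ((κj - κi) / (κj + κi) * chi ω ((κi + κj) * s) τ + chi ω ((κj - κi) * s) τ)

variable {s ω κ κi κj τ : ℝ}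

theorem exp_two_mul_mul (κ s τ : ℝ) : exp (2 * κ * s * τ) = exp (κ * s * τ) ^ 2 := by
  rw [← exp_nat_mul]; ring_nf

theorem exp_add_mul_mul (κi κj s τ : ℝ) :
    exp ((κi + κj) * s * τ) = exp (κi * s * τ) * exp (κj * s * τ) := by
  rw [← exp_add]; ring_nf

theorem exp_sub_mul_mul (κi κj s τ : ℝ) :
    exp ((κj - κi) * s * τ) = exp (κj * s * τ) / exp (κi * s * τ) := by
  rw [← exp_sub]; ring_nf

theorem hasDerivAt_exp_const_mul (a τ : ℝ) :
    HasDerivAt (fun t => exp (a * t)) (exp (a * τ) * a) τ := by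
  simpa using ((hasDerivAt_id τ).const_mul a).exp

theorem hasDerivAt_chi (a τ : ℝ) :
    HasDerivAt (chi ω a) (a * (exp (a * τ) + ω / exp (a * τ))) τ := by
  have he := hasDerivAt_exp_const_mul a τ
  refine (((he.sub_const 1).mul (he.add_const ω)).div he (exp_ne_zero _)).congr_deriv ?_
  simp only [Pi.mul_apply]
  field_simp
  ring

theorem hasDerivAt_intFactor (h : exp (2 * κ * s * τ) + ω ≠ 0) :
    HasDerivAt (intFactor s ω κ) (intFactor s ω κ τ *
      (κ * s - 2 * κ * s * exp (2 * κ * s * τ) / (exp (2 * κ * s * τ) + ω))) τ := by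
  refine ((hasDerivAt_exp_const_mul (κ * s) τ).div
    ((hasDerivAt_exp_const_mul (2 * κ * s) τ).add_const ω) h).congr_deriv ?_
  unfold intFactor
  generalize exp (2 * κ * s * τ) = E at h ⊢
  field_simp

theorem two_mul_psi_sub (hω : ω * (1 + s) = 1 - s) (h : exp (2 * κ * s * τ) + ω ≠ 0) :
    2 * psi s ω κ τ - s ^ 2 * κ =
      κ * s - 2 * κ * s * exp (2 * κ * s * τ) / (exp (2 * κ * s * τ) + ω) := by
  unfold psi
  generalize exp (2 * κ * s * τ) = E at h ⊢
  field_simp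
  linear_combination (-(κ * s)) * hω

theorem psi_add (hω : ω * (1 + s) = 1 - s) (h : exp (2 * κ * s * τ) + ω ≠ 0) :
    psi s ω κ τ + (1 - s ^ 2) / 2 * κ =
      κ * (1 - s) * (exp (2 * κ * s * τ) + 1) / (2 * (exp (2 * κ * s * τ) + ω)) := by
  unfold psi
  generalize exp (2 * κ * s * τ) = E at h ⊢
  field_simp
  linear_combination (κ * (1 - s)) * hω

theorem lam_eq_intFactor_mul :
    lam s ω κi κj = intFactor s ω κi * intFactor s ω κj * lamScaled s ω κi κj := by
  ext τ
  simp only [lam, intFactor, lamScaled, chi, Pi.mul_apply, exp_two_mul_mul, exp_add_mul_mul,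
    exp_sub_mul_mul]
  have hu := exp_ne_zero (κi * s * τ)
  have hv := exp_ne_zero (κj * s * τ)
  generalize exp (κi * s * τ) = u at hu ⊢
  generalize exp (κj * s * τ) = v at hv ⊢
  field_simp

theorem hasDerivAt_lamScaled (hκ : κj + κi ≠ 0) :
    HasDerivAt (lamScaled s ω κi κj) (κi * (s * (1 - s)) / 2 * ((κj - κi) * s) *
      (exp ((κi + κj) * s * τ) + ω / exp ((κi + κj) * s * τ)
        + exp ((κj - κi) * s * τ) + ω / exp ((κj - κi) * s * τ))) τ := by
  refine ((((hasDerivAt_chi _ τ).const_mul _).add (hasDerivAt_chi _ τ)).const_mul _).congr_deriv ?_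
  field_simp
  ring

theorem intFactor_mul_deriv_lamScaled (hi : exp (2 * κi * s * τ) + ω ≠ 0)
    (hj : exp (2 * κj * s * τ) + ω ≠ 0) :
    intFactor s ω κi τ * intFactor s ω κj τ * (κi * (s * (1 - s)) / 2 * ((κj - κi) * s) *
      (exp ((κi + κj) * s * τ) + ω / exp ((κi + κj) * s * τ)
        + exp ((κj - κi) * s * τ) + ω / exp ((κj - κi) * s * τ))) =
      -(s ^ 2 * (κi - κj)) *
        (κi * (1 - s) * (exp (2 * κi * s * τ) + 1) / (2 * (exp (2 * κi * s * τ) + ω))) := by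
  simp only [intFactor, exp_two_mul_mul, exp_add_mul_mul, exp_sub_mul_mul] at hi hj ⊢
  have hu := exp_ne_zero (κi * s * τ)
  have hv := exp_ne_zero (κj * s * τ)
  generalize exp (κi * s * τ) = u at hi hj hu hv ⊢
  generalize exp (κj * s * τ) = v at hi hj hu hv ⊢
  field_simp
  ring

theorem hasDerivAt_lam (hω : ω * (1 + s) = 1 - s) (hκ : κj + κi ≠ 0)
    (hi : exp (2 * κi * s * τ) + ω ≠ 0) (hj : exp (2 * κj * s * τ) + ω ≠ 0) :
    HasDerivAt (lam s ω κi κj)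
      (lam s ω κi κj τ * (2 * psi s ω κi τ + 2 * psi s ω κj τ - s ^ 2 * (κi + κj))
        - s ^ 2 * (κi - κj) * (psi s ω κi τ + (1 - s ^ 2) / 2 * κi)) τ := by
  rw [lam_eq_intFactor_mul]
  refine (((hasDerivAt_intFactor hi).mul (hasDerivAt_intFactor hj)).mul
    (hasDerivAt_lamScaled hκ)).congr_deriv ?_
  simp only [Pi.mul_apply]
  linear_combination
    - intFactor s ω κi τ * intFactor s ω κj τ * lamScaled s ω κi κj τ *
      (two_mul_psi_sub hω hi + two_mul_psi_sub hω hj)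
    + intFactor_mul_deriv_lamScaled hi hj + s ^ 2 * (κi - κj) * psi_add hω hi

theorem lam_zero : lam s ω κi κj 0 = 0 := by
  simp [lam]

theorem exp_two_mul_add_pos (hκ : 0 ≤ κ) (hs : 0 ≤ s) (hω : -1 < ω) (hτ : 0 ≤ τ) :
    0 < exp (2 * κ * s * τ) + ω := by
  have : 1 ≤ exp (2 * κ * s * τ) := one_le_exp (by positivity)
  linarith

end LambdaIJ

end

theorem stmt16_general (κi κj δ : ℝ) (hκi : 0 < κi) (hκj : 0 < κj)
    (hδ : 0 < δ)
    (ω : ℝ) (hω : ω = (1 - Real.sqrt δ) / (1 + Real.sqrt δ))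
    (Ψ : ℝ → ℝ → ℝ)
    (hΨ : Ψ = fun κ τ => κ * Real.sqrt δ * (Real.sqrt δ - 1) / 2 *
      ((Real.exp (2 * κ * Real.sqrt δ * τ) - 1) / (Real.exp (2 * κ * Real.sqrt δ * τ) + ω)))
    (lam : ℝ → ℝ)
    (hlam : lam = fun τ =>
      κi * (Real.sqrt δ * (1 - Real.sqrt δ)) /
        (2 * (Real.exp (2 * κi * Real.sqrt δ * τ) + ω) *
             (Real.exp (2 * κj * Real.sqrt δ * τ) + ω)) *
      ((κj - κi) / (κj + κi) *
          (Real.exp ((κi + κj) * Real.sqrt δ * τ) - 1) *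
          (Real.exp ((κi + κj) * Real.sqrt δ * τ) + ω)
        + Real.exp (2 * κi * Real.sqrt δ * τ) *
          (Real.exp ((κj - κi) * Real.sqrt δ * τ) - 1) *
          (Real.exp ((κj - κi) * Real.sqrt δ * τ) + ω))) :
    (∀ τ : ℝ, 0 ≤ τ →
      HasDerivAt lam
        (lam τ * (2 * Ψ κi τ + 2 * Ψ κj τ - δ * (κi + κj))
          - δ * (κi - κj) * (Ψ κi τ + (1 - δ) / 2 * κi)) τ) ∧
    lam 0 = 0 := by
  obtain ⟨s, hs, rfl⟩ : ∃ s, 0 < s ∧ δ = s ^ 2 := ⟨√δ, sqrt_pos.2 hδ, (sq_sqrt hδ.le).symm⟩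
  rw [sqrt_sq hs.le] at hω hΨ hlam
  subst hΨ hlam
  have hω' : ω * (1 + s) = 1 - s := by rw [hω]; field_simp
  have hω1 : -1 < ω := by rw [hω, lt_div_iff₀ (by positivity)]; linarith
  refine ⟨fun τ hτ => LambdaIJ.hasDerivAt_lam hω' (by positivity) ?_ ?_, LambdaIJ.lam_zero⟩ <;>
    exact (LambdaIJ.exp_two_mul_add_pos (by positivity) hs.le hω1 hτ).ne'

theorem stmt16 (κi κj δ : ℝ) (hκi : 0 < κi) (hκj : 0 < κj)
    (hsum : κi + κj ≠ 0) (hδ : 0 < δ) (hδ1 : δ ≠ 1)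
    (ω : ℝ) (hω : ω = (1 - Real.sqrt δ) / (1 + Real.sqrt δ))
    (Ψ : ℝ → ℝ → ℝ)
    (hΨ : Ψ = fun κ τ => κ * Real.sqrt δ * (Real.sqrt δ - 1) / 2 *
      ((Real.exp (2 * κ * Real.sqrt δ * τ) - 1) / (Real.exp (2 * κ * Real.sqrt δ * τ) + ω)))
    (lam : ℝ → ℝ)
    (hlam : lam = fun τ =>
      κi * (Real.sqrt δ * (1 - Real.sqrt δ)) /
        (2 * (Real.exp (2 * κi * Real.sqrt δ * τ) + ω) *
             (Real.exp (2 * κj * Real.sqrt δ * τ) + ω)) *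
      ((κj - κi) / (κj + κi) *
          (Real.exp ((κi + κj) * Real.sqrt δ * τ) - 1) *
          (Real.exp ((κi + κj) * Real.sqrt δ * τ) + ω)
        + Real.exp (2 * κi * Real.sqrt δ * τ) *
          (Real.exp ((κj - κi) * Real.sqrt δ * τ) - 1) *
          (Real.exp ((κj - κi) * Real.sqrt δ * τ) + ω))) :
    (∀ τ : ℝ, 0 ≤ τ →
      HasDerivAt lam
        (lam τ * (2 * Ψ κi τ + 2 * Ψ κj τ - δ * (κi + κj))
          - δ * (κi - κj) * (Ψ κi τ + (1 - δ) / 2 * κi)) τ) ∧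
    lam 0 = 0 :=
  stmt16_general κi κj δ hκi hκj hδ ω hω Ψ hΨ lam hlam
end
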